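/- For every k ∈ ℕ, the class Ω(k) of Boolean functions of characteristic rank at most k is closed under formation of minors and under pointwise sums: if f, g ∈ Ω(k) have the same arity then f + g ∈ Ω(k), and if f ∈ Ω(k) and σ : [n] → [m], then f_σ ∈ Ω(k). -/
import Mathlib

/-- A Boolean function of arity `n`. -/
abbrev Bf (n : ℕ) := (Fin n → ZMod 2) → ZMod 2

/-- The Zhegalkin coefficient of the monomial `x_S` of `f`, via Möbius inversion. -/
def zCoeff {n : ℕ} (f : Bf n) (S : Finset (Fin n)) : ZMod 2 :=
  ∑ T ∈ S.powerset, f fun i => if i ∈ T then 1 else 0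

/-- The set of monomials of the Zhegalkin polynomial of `f`. -/
def monomials {n : ℕ} (f : Bf n) : Finset (Finset (Fin n)) :=
  Finset.univ.filter fun S => zCoeff f S = 1
/-- The inner negation `f^n(a) = f(ā)`. -/
def innerNeg {n : ℕ} (f : Bf n) : Bf n := fun a => f fun i => a i + 1

/-- The number of monomials of `f` properly containing `S`; the characteristic
`Char(S, f)` is its parity. -/
def charCount {n : ℕ} (f : Bf n) (S : Finset (Fin n)) : ℕ :=
  ((monomials f).filter fun A => S ⊂ A).card

/-- The characteristic rank of `f` is at most `m`: `Char(S, f) = 0` for all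
`S` with `|S| ≥ m`. -/
def CharRankLE {n : ℕ} (f : Bf n) (m : ℕ) : Prop :=
  ∀ S : Finset (Fin n), m ≤ S.card → Even (charCount f S)

/-- The minor of `f` via `σ`. -/
def minor {n m : ℕ} (f : Bf n) (σ : Fin n → Fin m) : Bf m :=
  fun a => f fun i => a (σ i)

/- ------------------ auxiliary machinery ------------------ -/

def ind {n : ℕ} (T : Finset (Fin n)) : Fin n → ZMod 2 := fun i => if i ∈ T then 1 else 0

lemma zCoeff_eq {n : ℕ} (f : Bf n) (S : Finset (Fin n)) :
    zCoeff f S = ∑ T ∈ S.powerset, f (ind T) := rfl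

lemma smul_even_zmod2 {c : ℕ} (hc : Even c) (x : ZMod 2) : c • x = 0 := by
  rw [nsmul_eq_mul, (ZMod.natCast_eq_zero_iff c 2).mpr hc.two_dvd, zero_mul]

lemma icc_smul_ne {α : Type*} [DecidableEq α] {B C : Finset α} (h : B ≠ C) (x : ZMod 2) :
    (Finset.Icc B C).card • x = 0 := by
  by_cases hBC : B ⊆ C
  · apply smul_even_zmod2
    rw [Finset.card_Icc_finset hBC]
    have hlt : B.card < C.card := Finset.card_lt_card ⟨hBC, fun h2 => h (le_antisymm hBC h2)⟩
    exact (Nat.even_pow.mpr ⟨even_two, Nat.sub_ne_zero_of_lt hlt⟩)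
  · rw [Finset.Icc_eq_empty hBC, Finset.card_empty, zero_smul]

lemma icc_smul_self {α : Type*} [DecidableEq α] (B : Finset α) (x : ZMod 2) :
    (Finset.Icc B B).card • x = x := by
  rw [Finset.Icc_self, Finset.card_singleton, one_smul]

/-- Möbius inversion. -/
lemma sum_zCoeff_powerset {n : ℕ} (f : Bf n) (T : Finset (Fin n)) :
    ∑ S ∈ T.powerset, zCoeff f S = f (ind T) := by
  simp only [zCoeff_eq]
  rw [Finset.sum_comm' (s := T.powerset) (t := fun S => S.powerset)
      (t' := Finset.univ) (s' := fun U => Finset.Icc U T)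
      (by intro S U
          simp only [Finset.mem_powerset, Finset.mem_Icc, Finset.mem_univ, and_true,
            Finset.le_iff_subset]
          tauto)]
  simp only [Finset.sum_const]
  rw [Finset.sum_eq_single_of_mem T (Finset.mem_univ T)
      (fun U _ hne => icc_smul_ne hne _)]
  exact icc_smul_self T _

lemma zCoeff_add {n : ℕ} (f g : Bf n) (S : Finset (Fin n)) :
    zCoeff (fun a => f a + g a) S = zCoeff f S + zCoeff g S := by
  simp only [zCoeff]
  rw [← Finset.sum_add_distrib]

lemma charCount_cast {n : ℕ} (f : Bf n) (S : Finset (Fin n)) :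
    ((charCount f S : ℕ) : ZMod 2) = ∑ A ∈ Finset.univ.filter (fun A => S ⊂ A), zCoeff f A := by
  have : ∀ x : ZMod 2, x = if x = 1 then (1 : ZMod 2) else 0 := by decide
  rw [Finset.sum_congr rfl (fun A _ => this (zCoeff f A)), Finset.sum_boole]
  unfold charCount monomials
  rw [Finset.filter_comm]

lemma charCount_even_iff {n : ℕ} (f : Bf n) (S : Finset (Fin n)) :
    Even (charCount f S) ↔ ∑ A ∈ Finset.univ.filter (fun A => S ⊂ A), zCoeff f A = 0 := by
  rw [← charCount_cast, ZMod.natCast_eq_zero_iff, Nat.even_iff, Nat.dvd_iff_mod_eq_zero]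

/-- `zCoeff` of the inner negation is the full "superset sum". -/
lemma zCoeff_innerNeg {n : ℕ} (f : Bf n) (S : Finset (Fin n)) :
    zCoeff (innerNeg f) S = ∑ A ∈ Finset.univ.filter (fun A => S ⊆ A), zCoeff f A := by
  have hcompl : ∀ T : Finset (Fin n), innerNeg f (ind T) = f (ind Tᶜ) := by
    intro T
    unfold innerNeg ind
    congr 1
    funext i
    by_cases h : i ∈ T <;> simp [h]
    decide
  -- LHS as a sum over complements
  rw [zCoeff_eq]
  have hL : ∑ T ∈ S.powerset, innerNeg f (ind T)
      = ∑ U ∈ Finset.univ.filter (fun U => S ∪ U = Finset.univ), f (ind U) := by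
    refine Finset.sum_nbij' (fun T => Tᶜ) (fun U => Uᶜ) ?_ ?_ ?_ ?_ ?_
    · intro T hT
      rw [Finset.mem_powerset] at hT
      simp only [Finset.mem_filter, Finset.mem_univ, true_and]
      apply Finset.eq_univ_iff_forall.mpr
      intro i
      by_cases h : i ∈ S
      · exact Finset.mem_union_left _ h
      · exact Finset.mem_union_right _ (Finset.mem_compl.mpr fun hi => h (hT hi))
    · intro U hU
      simp only [Finset.mem_filter, Finset.mem_univ, true_and] at hU
      rw [Finset.mem_powerset]
      intro i hi
      rw [Finset.mem_compl] at hi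
      have : i ∈ S ∪ U := hU ▸ Finset.mem_univ i
      rcases Finset.mem_union.mp this with h | h
      · exact h
      · exact absurd h hi
    · intro T _; exact compl_compl T
    · intro U _; exact compl_compl U
    · intro T _; exact hcompl T
  rw [hL]
  -- RHS by swapping sums
  simp only [zCoeff_eq]
  rw [Finset.sum_comm' (s := Finset.univ.filter (fun A => S ⊆ A)) (t := fun A => A.powerset)
      (t' := Finset.univ) (s' := fun T => Finset.Icc (S ∪ T) Finset.univ)
      (by intro A T
          simp only [Finset.mem_filter, Finset.mem_univ, true_and, and_true,
            Finset.mem_powerset, Finset.mem_Icc, Finset.le_iff_subset,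
            Finset.union_subset_iff, Finset.subset_univ])]
  simp only [Finset.sum_const]
  rw [Finset.sum_filter]
  apply Finset.sum_congr rfl
  intro T _
  by_cases h : S ∪ T = Finset.univ
  · rw [if_pos h, h, icc_smul_self]
  · rw [if_neg h, icc_smul_ne h]

/-- The key reformulation: the characteristic is the coefficient of `f + innerNeg f`. -/
lemma propersum_eq {n : ℕ} (f : Bf n) (S : Finset (Fin n)) :
    ∑ A ∈ Finset.univ.filter (fun A => S ⊂ A), zCoeff f A
      = zCoeff (fun a => f a + innerNeg f a) S := by
  rw [zCoeff_add, zCoeff_innerNeg]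
  have hsplit : (Finset.univ.filter (fun A => S ⊆ A))
      = insert S (Finset.univ.filter (fun A => S ⊂ A)) := by
    ext A
    simp only [Finset.mem_filter, Finset.mem_univ, true_and, Finset.mem_insert,
      Finset.ssubset_iff_subset_ne]
    constructor
    · intro h
      by_cases he : A = S
      · exact Or.inl he
      · exact Or.inr ⟨h, fun h2 => he h2.symm⟩
    · rintro (he | ⟨h, _⟩)
      · subst he; exact Finset.Subset.refl _
      · exact h
  have hS : S ∉ Finset.univ.filter (fun A => S ⊂ A) := by
    simp only [Finset.mem_filter, Finset.mem_univ, true_and]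
    exact fun h => ssubset_irrefl S h
  rw [hsplit, Finset.sum_insert hS, ← add_assoc, CharTwo.add_self_eq_zero, zero_add]

lemma charCount_even_iff' {n : ℕ} (f : Bf n) (S : Finset (Fin n)) :
    Even (charCount f S) ↔ zCoeff (fun a => f a + innerNeg f a) S = 0 := by
  rw [charCount_even_iff, propersum_eq]

/-- Coefficients of a minor vanish above the degree of the original. -/
lemma zCoeff_minor_zero {n m k : ℕ} (h : Bf n) (σ : Fin n → Fin m)
    (hk : ∀ A : Finset (Fin n), k ≤ A.card → zCoeff h A = 0)
    (S : Finset (Fin m)) (hS : k ≤ S.card) : zCoeff (minor h σ) S = 0 := by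
  rw [zCoeff_eq]
  have hpre : ∀ T : Finset (Fin m),
      minor h σ (ind T) = h (ind (Finset.univ.filter (fun i => σ i ∈ T))) := by
    intro T
    unfold minor ind
    congr 1
    funext i
    simp [Finset.mem_filter]
  calc ∑ T ∈ S.powerset, minor h σ (ind T)
      = ∑ T ∈ S.powerset, ∑ A ∈ (Finset.univ.filter (fun i => σ i ∈ T)).powerset,
          zCoeff h A := by
        refine Finset.sum_congr rfl fun T _ => ?_
        exact (hpre T).trans (sum_zCoeff_powerset h _).symm
    _ = ∑ A ∈ (Finset.univ : Finset (Finset (Fin n))),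
          ∑ T ∈ Finset.Icc (A.image σ) S, zCoeff h A := by
        refine Finset.sum_comm' ?_
        intro T A
        simp only [Finset.mem_powerset, Finset.mem_univ, and_true, true_and, Finset.mem_Icc,
          Finset.le_iff_subset, Finset.subset_iff, Finset.mem_filter, Finset.mem_univ, true_and]
        constructor
        · rintro ⟨hTS, hA⟩
          refine ⟨?_, hTS⟩
          intro x hx
          rcases Finset.mem_image.mp hx with ⟨i, hi, rfl⟩
          exact hA hi
        · rintro ⟨himg, hTS⟩
          exact ⟨hTS, fun i hi => himg (Finset.mem_image_of_mem σ hi)⟩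
    _ = 0 := by
        apply Finset.sum_eq_zero
        intro A _
        rw [Finset.sum_const]
        by_cases he : A.image σ = S
        · rw [hk A ?_, smul_zero]
          calc k ≤ S.card := hS
            _ = (A.image σ).card := by rw [he]
            _ ≤ A.card := Finset.card_image_le
        · exact icc_smul_ne he _

/-- The class `Ω(k)` of functions of characteristic rank at most `k` is closed
under minors and under pointwise sums. -/
theorem charRankLE_closed_add_minor (k : ℕ) :
    (∀ (n : ℕ) (f g : Bf n), CharRankLE f k → CharRankLE g k →
      CharRankLE (fun a => f a + g a) k) ∧
    (∀ (n m : ℕ) (f : Bf n) (σ : Fin n → Fin m), CharRankLE f k →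
      CharRankLE (minor f σ) k) := by
  constructor
  · intro n f g hf hg S hSk
    rw [charCount_even_iff']
    have heq : (fun a => (fun b => f b + g b) a + innerNeg (fun b => f b + g b) a)
        = (fun a => (fun b => f b + innerNeg f b) a + (fun b => g b + innerNeg g b) a) := by
      funext a
      simp only [innerNeg]
      ring
    rw [heq, zCoeff_add, (charCount_even_iff' f S).mp (hf S hSk),
      (charCount_even_iff' g S).mp (hg S hSk), add_zero]
  · intro n m f σ hf S hSk
    rw [charCount_even_iff']
    have heq : (fun a => minor f σ a + innerNeg (minor f σ) a)
        = minor (fun b => f b + innerNeg f b) σ := rfl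
    rw [heq]
    exact zCoeff_minor_zero _ σ
      (fun A hA => (charCount_even_iff' f A).mp (hf A hA)) S hSk
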